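/- Let u : [0,S] → ℝ^ℤ be a solution of the FK equation such that for some m ∈ ℕ one has u(t) ∈ K_m for all t ∈ [0,S]. If u(0) ∈ K_n for some natural number n ≤ m, then u(t) ∈ K_n for all t ∈ [0,S]. -/

import Mathlib

open Set Filter Topology

/-- First partial derivative `∂₁V`. -/
noncomputable def V1 (V : ℝ → ℝ → ℝ) (x y : ℝ) : ℝ := deriv (fun s => V s y) x

/-- Second partial derivative `∂₂V`. -/
noncomputable def V2 (V : ℝ → ℝ → ℝ) (x y : ℝ) : ℝ := deriv (fun s => V x s) y

/-- Mixed partial derivative `∂₁∂₂V`. -/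
noncomputable def V12 (V : ℝ → ℝ → ℝ) (x y : ℝ) : ℝ := deriv (fun s => V2 V s y) x

/-- The set of configurations with spacing bounded by `n`. -/
def Kn (n : ℕ) : Set (ℤ → ℝ) := {u | ∀ i : ℤ, |u (i + 1) - u i| ≤ (n : ℝ)}

/-- `u` solves the driven Frenkel–Kontorova equation on the set of times `I`. -/
def SolvesFK (V : ℝ → ℝ → ℝ) (F : ℝ → ℝ) (I : Set ℝ) (u : ℝ → ℤ → ℝ) : Prop :=
  ∀ j : ℤ, ∀ t ∈ I, HasDerivWithinAt (fun s => u s j)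
    (-(V2 V (u t (j - 1)) (u t j)) - V1 V (u t j) (u t (j + 1)) + F t) I t

/- ## Auxiliary material -/

set_option linter.unusedSectionVars false

noncomputable def fpp (V : ℝ → ℝ → ℝ) : ℝ × ℝ → (ℝ × ℝ →L[ℝ] (ℝ × ℝ →L[ℝ] ℝ)) :=
  fun p => fderiv ℝ (fderiv ℝ (Function.uncurry V)) p

lemma genper {G : Type*} (g : ℝ × ℝ → G) (h : ∀ p, g (p + (1, 1)) = g p) :
    ∀ (k : ℤ) (p : ℝ × ℝ), g (p + ((k : ℝ), (k : ℝ))) = g p := by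
  intro k
  induction k using Int.induction_on with
  | zero => simp
  | succ i ih =>
    intro p
    have e : (p + (((i : ℝ) + 1), ((i : ℝ) + 1))) = (p + ((i : ℝ), (i : ℝ))) + (1, 1) := by
      apply Prod.ext <;> simp <;> ring
    push_cast at ih ⊢
    rw [e, h, ih]
  | pred i ih =>
    intro p
    have e : (p + ((-(i : ℝ) - 1), (-(i : ℝ) - 1))) + (1, 1) = p + (-(i : ℝ), -(i : ℝ)) := by
      apply Prod.ext <;> simp <;> ring
    have h2 := h (p + ((-(i : ℝ) - 1), (-(i : ℝ) - 1)))
    rw [e] at h2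
    push_cast at ih ⊢
    rw [← h2, ih]

lemma anti_global {g g' : ℝ → ℝ} (hg : ∀ s, HasDerivAt g (g' s) s) (h : ∀ s, g' s ≤ 0) :
    Antitone g :=
  antitone_of_deriv_nonpos (fun s => (hg s).differentiableAt)
    (fun s => by rw [(hg s).deriv]; exact h s)

lemma lip_interval {g g' : ℝ → ℝ} {a b L : ℝ} (hab : a ≤ b)
    (hg : ∀ s ∈ Icc a b, HasDerivAt g (g' s) s) (hL : ∀ s ∈ Icc a b, |g' s| ≤ L) :
    |g b - g a| ≤ L * (b - a) := by
  have := norm_image_sub_le_of_norm_deriv_le_segment' (f := g) (f' := g') (a := a) (b := b)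
    (fun s hs => (hg s hs).hasDerivWithinAt)
    (fun s hs => hL s (Ico_subset_Icc_self hs)) b (right_mem_Icc.mpr hab)
  simpa using this

section
variable {V : ℝ → ℝ → ℝ} (hV : ContDiff ℝ 2 (Function.uncurry V))
include hV

lemma hf' : ∀ p, HasFDerivAt (Function.uncurry V) (fderiv ℝ (Function.uncurry V) p) p :=
  fun p => (hV.differentiable (by norm_num) p).hasFDerivAt

lemma hC1 : ContDiff ℝ 1 (fderiv ℝ (Function.uncurry V)) := hV.fderiv_right (le_refl 2)

lemma hf'' : ∀ p, HasFDerivAt (fderiv ℝ (Function.uncurry V)) (fpp V p) p :=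
  fun p => ((hC1 hV).differentiable one_ne_zero p).hasFDerivAt

lemma fpp_symm (p : ℝ × ℝ) (v w : ℝ × ℝ) : fpp V p v w = fpp V p w v :=
  second_derivative_symmetric (hf' hV) (hf'' hV p) v w

lemma curve (x y : ℝ) : HasDerivAt (fun s => (s, y)) ((1 : ℝ), (0 : ℝ)) x :=
  (hasDerivAt_id x).prodMk (hasDerivAt_const x y)

lemma curve2 (x y : ℝ) : HasDerivAt (fun s => (x, s)) ((0 : ℝ), (1 : ℝ)) y :=
  (hasDerivAt_const y x).prodMk (hasDerivAt_id y)

lemma hasDerivAt_V1 (x y : ℝ) :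
    HasDerivAt (fun s => V s y) (fderiv ℝ (Function.uncurry V) (x, y) (1, 0)) x :=
  by have h := (hf' hV (x, y)).comp_hasDerivAt x (curve hV x y); exact h

lemma hasDerivAt_V2 (x y : ℝ) :
    HasDerivAt (fun s => V x s) (fderiv ℝ (Function.uncurry V) (x, y) (0, 1)) y :=
  (hf' hV (x, y)).comp_hasDerivAt y (curve2 hV x y)

lemma V1_eq (x y : ℝ) : V1 V x y = fderiv ℝ (Function.uncurry V) (x, y) (1, 0) :=
  (hasDerivAt_V1 hV x y).deriv

lemma V2_eq (x y : ℝ) : V2 V x y = fderiv ℝ (Function.uncurry V) (x, y) (0, 1) :=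
  (hasDerivAt_V2 hV x y).deriv

lemma hasFDerivAt_applied (v : ℝ × ℝ) (p : ℝ × ℝ) :
    HasFDerivAt (fun q => fderiv ℝ (Function.uncurry V) q v)
      ((ContinuousLinearMap.apply ℝ ℝ v).comp (fpp V p)) p :=
  (ContinuousLinearMap.apply ℝ ℝ v).hasFDerivAt.comp p (hf'' hV p)

lemma hasDerivAt_V2_fst (x y : ℝ) :
    HasDerivAt (fun s => V2 V s y) (fpp V (x, y) (1, 0) (0, 1)) x := by
  have h : HasDerivAt (fun s => fderiv ℝ (Function.uncurry V) (s, y) (0, 1))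
      (fpp V (x, y) (1, 0) (0, 1)) x :=
    by have h := (hasFDerivAt_applied hV (0,1) (x,y)).comp_hasDerivAt x (curve hV x y); exact h
  exact h.congr_of_eventuallyEq (Eventually.of_forall fun s => V2_eq hV s y)

lemma hasDerivAt_V2_snd (x y : ℝ) :
    HasDerivAt (fun s => V2 V x s) (fpp V (x, y) (0, 1) (0, 1)) y := by
  have h : HasDerivAt (fun s => fderiv ℝ (Function.uncurry V) (x, s) (0, 1))
      (fpp V (x, y) (0, 1) (0, 1)) y :=
    (hasFDerivAt_applied hV (0,1) (x,y)).comp_hasDerivAt y (curve2 hV x y)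
  exact h.congr_of_eventuallyEq (Eventually.of_forall fun s => V2_eq hV x s)

lemma hasDerivAt_V1_fst (x y : ℝ) :
    HasDerivAt (fun s => V1 V s y) (fpp V (x, y) (1, 0) (1, 0)) x := by
  have h : HasDerivAt (fun s => fderiv ℝ (Function.uncurry V) (s, y) (1, 0))
      (fpp V (x, y) (1, 0) (1, 0)) x :=
    by have h := (hasFDerivAt_applied hV (1,0) (x,y)).comp_hasDerivAt x (curve hV x y); exact h
  exact h.congr_of_eventuallyEq (Eventually.of_forall fun s => V1_eq hV s y)

lemma hasDerivAt_V1_snd (x y : ℝ) :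
    HasDerivAt (fun s => V1 V x s) (fpp V (x, y) (0, 1) (1, 0)) y := by
  have h : HasDerivAt (fun s => fderiv ℝ (Function.uncurry V) (x, s) (1, 0))
      (fpp V (x, y) (0, 1) (1, 0)) y :=
    (hasFDerivAt_applied hV (1,0) (x,y)).comp_hasDerivAt y (curve2 hV x y)
  exact h.congr_of_eventuallyEq (Eventually.of_forall fun s => V1_eq hV x s)

lemma V12_eq (x y : ℝ) : V12 V x y = fpp V (x, y) (1, 0) (0, 1) :=
  (hasDerivAt_V2_fst hV x y).deriv

lemma hasDerivAt_V2_fst' (x y : ℝ) :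
    HasDerivAt (fun s => V2 V s y) (V12 V x y) x := by
  rw [V12_eq hV]; exact hasDerivAt_V2_fst hV x y

lemma hasDerivAt_V1_snd' (x y : ℝ) :
    HasDerivAt (fun s => V1 V x s) (V12 V x y) y := by
  rw [V12_eq hV, ← fpp_symm hV]
  exact hasDerivAt_V1_snd hV x y

lemma fpp_apply_bound (p v w : ℝ × ℝ) (hv : ‖v‖ ≤ 1) (hw : ‖w‖ ≤ 1) :
    |fpp V p v w| ≤ ‖fpp V p‖ := by
  have h1 : ‖fpp V p v w‖ ≤ ‖fpp V p v‖ * ‖w‖ := (fpp V p v).le_opNorm w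
  have h2 : ‖fpp V p v‖ ≤ ‖fpp V p‖ * ‖v‖ := (fpp V p).le_opNorm v
  have h3 : (0:ℝ) ≤ ‖fpp V p v‖ := norm_nonneg _
  have h4 : (0:ℝ) ≤ ‖fpp V p‖ := norm_nonneg (fpp V p)
  have h5 : |fpp V p v w| = ‖fpp V p v w‖ := rfl
  nlinarith [norm_nonneg w, norm_nonneg v]

lemma norm_e1 : ‖(((1:ℝ), (0:ℝ)) : ℝ × ℝ)‖ ≤ 1 := by
  rw [Prod.norm_def]; simp

lemma norm_e2 : ‖(((0:ℝ), (1:ℝ)) : ℝ × ℝ)‖ ≤ 1 := by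
  rw [Prod.norm_def]; simp

variable (hper : ∀ x y : ℝ, V (x + 1) (y + 1) = V x y)
include hper

lemma uncurry_per : ∀ p : ℝ × ℝ, Function.uncurry V (p + (1, 1)) = Function.uncurry V p :=
  fun p => hper p.1 p.2

lemma fd_per : ∀ p : ℝ × ℝ, fderiv ℝ (Function.uncurry V) (p + (1, 1)) =
    fderiv ℝ (Function.uncurry V) p := by
  intro p
  have h1 : HasFDerivAt (fun q : ℝ × ℝ => Function.uncurry V (q + (1, 1)))
      ((fderiv ℝ (Function.uncurry V) (p + (1, 1))).comp (ContinuousLinearMap.id ℝ (ℝ × ℝ))) p :=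
    by have h := (hf' hV (p + (1,1))).comp p ((hasFDerivAt_id p).add_const (1,1)); exact h
  rw [ContinuousLinearMap.comp_id] at h1
  have h2 : (fun q : ℝ × ℝ => Function.uncurry V (q + (1, 1))) = Function.uncurry V :=
    funext (uncurry_per hV hper)
  rw [h2] at h1
  exact h1.fderiv.symm

lemma fpp_per : ∀ p : ℝ × ℝ, fpp V (p + (1, 1)) = fpp V p := by
  intro p
  have h1 : HasFDerivAt (fun q : ℝ × ℝ => fderiv ℝ (Function.uncurry V) (q + (1, 1)))
      ((fpp V (p + (1, 1))).comp (ContinuousLinearMap.id ℝ (ℝ × ℝ))) p :=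
    (hf'' hV (p + (1,1))).comp p ((hasFDerivAt_id p).add_const (1,1))
  rw [ContinuousLinearMap.comp_id] at h1
  have h2 : (fun q : ℝ × ℝ => fderiv ℝ (Function.uncurry V) (q + (1, 1))) =
      fderiv ℝ (Function.uncurry V) := funext (fd_per hV hper)
  rw [h2] at h1
  exact h1.fderiv.symm

lemma fd_per_int : ∀ (k : ℤ) (x y : ℝ), fderiv ℝ (Function.uncurry V) (x + k, y + k) =
    fderiv ℝ (Function.uncurry V) (x, y) := by
  intro k x y
  have := genper (fderiv ℝ (Function.uncurry V)) (fd_per hV hper) k (x, y)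
  simpa using this

lemma V1_shift (k : ℤ) (x y : ℝ) : V1 V (x + k) (y + k) = V1 V x y := by
  rw [V1_eq hV, V1_eq hV, fd_per_int hV hper k x y]

lemma V2_shift (k : ℤ) (x y : ℝ) : V2 V (x + k) (y + k) = V2 V x y := by
  rw [V2_eq hV, V2_eq hV, fd_per_int hV hper k x y]

lemma V1_shift' (k : ℤ) (x y : ℝ) : V1 V (x - k) (y - k) = V1 V x y := by
  have := V1_shift hV hper k (x - k) (y - k)
  simpa [sub_add_cancel] using this.symm

lemma V2_shift' (k : ℤ) (x y : ℝ) : V2 V (x - k) (y - k) = V2 V x y := by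
  have := V2_shift hV hper k (x - k) (y - k)
  simpa [sub_add_cancel] using this.symm

lemma V1_shiftN (n : ℕ) (x y : ℝ) : V1 V (x - n) (y - n) = V1 V x y := by
  have := V1_shift' hV hper (n : ℤ) x y
  push_cast at this
  exact this

lemma V2_shiftN (n : ℕ) (x y : ℝ) : V2 V (x - n) (y - n) = V2 V x y := by
  have := V2_shift' hV hper (n : ℤ) x y
  push_cast at this
  exact this

lemma strip_bound (R : ℝ) : ∃ L : ℝ, 0 ≤ L ∧
    ∀ x y : ℝ, |y - x| ≤ R → ‖fpp V (x, y)‖ ≤ L := by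
  set K : Set (ℝ × ℝ) := (fun q : ℝ × ℝ => (q.1, q.1 + q.2)) '' (Icc 0 1 ×ˢ Icc (-R) R) with hK
  have hKc : IsCompact K :=
    (isCompact_Icc.prod isCompact_Icc).image (by fun_prop)
  have hcont : Continuous (fpp V) := (hC1 hV).continuous_fderiv one_ne_zero
  obtain ⟨C, hC⟩ := hKc.exists_bound_of_continuousOn (f := fpp V) hcont.continuousOn
  refine ⟨max C 0, le_max_right _ _, ?_⟩
  intro x y hxy
  set k : ℤ := ⌊x⌋ with hk
  have hmem : ((x - k, y - k) : ℝ × ℝ) ∈ K := by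
    have hf1 := Int.floor_le x
    have hf2 := Int.lt_floor_add_one x
    refine ⟨(x - k, y - x), ⟨Set.mem_Icc.mpr ⟨by simp only [hk]; linarith,
      by simp only [hk]; linarith⟩,
      Set.mem_Icc.mpr (abs_le.mp hxy)⟩, by simp⟩
  have hper' : fpp V (x, y) = fpp V (x - k, y - k) := by
    have := genper (fpp V) (fpp_per hV hper) k ((x - k, y - k) : ℝ × ℝ)
    simp only [Prod.mk_add_mk, sub_add_cancel] at this
    exact this
  rw [hper']
  exact le_trans (hC _ hmem) (le_max_left _ _)

end

lemma fk_core
    (δ : ℝ) (hδ : 0 < δ) (V : ℝ → ℝ → ℝ) (F : ℝ → ℝ)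
    (hV : ContDiff ℝ 2 (Function.uncurry V))
    (hper : ∀ x y : ℝ, V (x + 1) (y + 1) = V x y)
    (htwist : ∀ x y : ℝ, V12 V x y ≤ -δ)
    (S : ℝ) (hS : 0 ≤ S) (m : ℕ) (M : ℝ) (hM0 : 0 ≤ M)
    (u w : ℝ → ℤ → ℝ)
    (hsu : SolvesFK V F (Icc 0 S) u) (hsw : SolvesFK V F (Icc 0 S) w)
    (hu : ∀ t ∈ Icc 0 S, u t ∈ Kn m)
    (hMd : ∀ t ∈ Icc 0 S, ∀ j : ℤ, |w t j - u t j| ≤ M)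
    (h0 : ∀ j : ℤ, w 0 j ≤ u 0 j) :
    ∀ t ∈ Icc 0 S, ∀ j : ℤ, w t j ≤ u t j := by
  obtain ⟨L, hL0, hLb⟩ := strip_bound hV hper ((m : ℝ) + 2 * M)
  -- derivative of the difference
  have hde : ∀ (j : ℤ) (t : ℝ), t ∈ Icc 0 S → HasDerivWithinAt (fun s => w s j - u s j)
      ((-(V2 V (w t (j-1)) (w t j)) - V1 V (w t j) (w t (j+1))) -
       (-(V2 V (u t (j-1)) (u t j)) - V1 V (u t j) (u t (j+1)))) (Icc 0 S) t := by
    intro j t ht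
    have h := (hsw j t ht).sub (hsu j t ht)
    refine h.congr_deriv ?_
    ring
  have hcont : ∀ j : ℤ, ContinuousOn (fun s => w s j - u s j) (Icc 0 S) :=
    fun j s hs => (hde j s hs).continuousWithinAt
  -- pointwise derivative bound
  have key : ∀ t ∈ Icc 0 S, ∀ (j : ℤ) (b : ℝ), 0 ≤ b → b ≤ M →
      (∀ i : ℤ, w t i - u t i ≤ b) → 0 < w t j - u t j →
      (-(V2 V (w t (j-1)) (w t j)) - V1 V (w t j) (w t (j+1))) -
       (-(V2 V (u t (j-1)) (u t j)) - V1 V (u t j) (u t (j+1))) ≤ 4 * L * b := by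
    intro t ht j b hb0 hbM hall hpos
    set a0 := u t (j-1) with ha0
    set a1 := u t j with ha1
    set a2 := u t (j+1) with ha2
    set c0 := w t (j-1) with hc0
    set c1 := w t j with hc1
    set c2 := w t (j+1) with hc2
    have hm1 : |a1 - a0| ≤ (m:ℝ) := by
      have h := hu t ht (j-1)
      have e : j - 1 + 1 = j := by ring
      rw [e] at h
      exact h
    have hm2 : |a2 - a1| ≤ (m:ℝ) := hu t ht j
    have hM0' : |c0 - a0| ≤ M := hMd t ht (j-1)
    have hM1 : |c1 - a1| ≤ M := hMd t ht j
    have hM2' : |c2 - a2| ≤ M := hMd t ht (j+1)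
    have hb0' : c0 - a0 ≤ b := hall (j-1)
    have hb2 : c2 - a2 ≤ b := hall (j+1)
    have hb1 : c1 - a1 ≤ b := hall j
    obtain ⟨hm1a, hm1b⟩ := abs_le.mp hm1
    obtain ⟨hm2a, hm2b⟩ := abs_le.mp hm2
    obtain ⟨hM0a, hM0b⟩ := abs_le.mp hM0'
    obtain ⟨hM1a, hM1b⟩ := abs_le.mp hM1
    obtain ⟨hM2a, hM2b⟩ := abs_le.mp hM2'
    -- Step A : V2 V a0 c1 - V2 V c0 c1 ≤ L * b
    have stepA : V2 V a0 c1 - V2 V c0 c1 ≤ L * b := by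
      have anti : Antitone (fun s => V2 V s c1) :=
        anti_global (fun s => hasDerivAt_V2_fst' hV s c1)
          (fun s => le_trans (htwist s c1) (by linarith))
      have h1 : V2 V (a0 + b) c1 ≤ V2 V c0 c1 := anti (by linarith)
      have h2 : |V2 V (a0 + b) c1 - V2 V a0 c1| ≤ L * b := by
        have hlip := lip_interval (L := L) (g := fun s => V2 V s c1) (g' := fun s => V12 V s c1)
          (a := a0) (b := a0 + b) (by linarith)
          (fun s _ => hasDerivAt_V2_fst' hV s c1)
          (fun s hs => by
            show |V12 V _ _| ≤ L
            rw [V12_eq hV]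
            refine le_trans (fpp_apply_bound hV _ _ _ (norm_e1 hV) (norm_e2 hV)) ?_
            refine hLb s c1 ?_
            obtain ⟨hs1, hs2⟩ := hs
            rw [abs_le]; constructor <;> linarith)
        simpa [add_sub_cancel_left] using hlip
      have := abs_le.mp h2
      linarith
    -- Step B : V2 V a0 a1 - V2 V a0 c1 ≤ L * b
    have stepB : V2 V a0 a1 - V2 V a0 c1 ≤ L * b := by
      have hlip := lip_interval (L := L) (g := fun s => V2 V a0 s)
        (g' := fun s => fpp V (a0, s) (0, 1) (0, 1))
        (a := a1) (b := c1) (by linarith)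
        (fun s _ => hasDerivAt_V2_snd hV a0 s)
        (fun s hs => by
          show |fpp V (a0, s) (0,1) (0,1)| ≤ L
          refine le_trans (fpp_apply_bound hV _ _ _ (norm_e2 hV) (norm_e2 hV)) ?_
          refine hLb a0 s ?_
          obtain ⟨hs1, hs2⟩ := hs
          rw [abs_le]; constructor <;> linarith)
      have h2 := abs_le.mp hlip
      have hLb' : L * (c1 - a1) ≤ L * b := by
        apply mul_le_mul_of_nonneg_left hb1 hL0
      obtain ⟨h2a, h2b⟩ := h2
      linarith
    -- Step C : V1 V c1 a2 - V1 V c1 c2 ≤ L * b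
    have stepC : V1 V c1 a2 - V1 V c1 c2 ≤ L * b := by
      have anti : Antitone (fun s => V1 V c1 s) :=
        anti_global (fun s => hasDerivAt_V1_snd' hV c1 s)
          (fun s => le_trans (htwist c1 s) (by linarith))
      have h1 : V1 V c1 (a2 + b) ≤ V1 V c1 c2 := anti (by linarith)
      have h2 : |V1 V c1 (a2 + b) - V1 V c1 a2| ≤ L * b := by
        have hlip := lip_interval (L := L) (g := fun s => V1 V c1 s) (g' := fun s => V12 V c1 s)
          (a := a2) (b := a2 + b) (by linarith)
          (fun s _ => hasDerivAt_V1_snd' hV c1 s)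
          (fun s hs => by
            show |V12 V _ _| ≤ L
            rw [V12_eq hV]
            refine le_trans (fpp_apply_bound hV _ _ _ (norm_e1 hV) (norm_e2 hV)) ?_
            refine hLb c1 s ?_
            obtain ⟨hs1, hs2⟩ := hs
            rw [abs_le]; constructor <;> linarith)
        simpa [add_sub_cancel_left] using hlip
      have := abs_le.mp h2
      linarith
    -- Step D : V1 V a1 a2 - V1 V c1 a2 ≤ L * b
    have stepD : V1 V a1 a2 - V1 V c1 a2 ≤ L * b := by
      have hlip := lip_interval (L := L) (g := fun s => V1 V s a2)
        (g' := fun s => fpp V (s, a2) (1, 0) (1, 0))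
        (a := a1) (b := c1) (by linarith)
        (fun s _ => hasDerivAt_V1_fst hV s a2)
        (fun s hs => by
          show |fpp V (s, a2) (1,0) (1,0)| ≤ L
          refine le_trans (fpp_apply_bound hV _ _ _ (norm_e1 hV) (norm_e1 hV)) ?_
          refine hLb s a2 ?_
          obtain ⟨hs1, hs2⟩ := hs
          rw [abs_le]; constructor <;> linarith)
      have h2 := abs_le.mp hlip
      have hLb' : L * (c1 - a1) ≤ L * b := mul_le_mul_of_nonneg_left hb1 hL0
      obtain ⟨h2a, h2b⟩ := h2
      linarith
    linarith
  -- the comparison polynomial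
  set Bk : ℕ → ℝ → ℝ := fun k s => M * (4*L)^k / (k.factorial) * s^k with hBk
  have hBknn : ∀ k : ℕ, ∀ s : ℝ, 0 ≤ s → 0 ≤ Bk k s := by
    intro k s hs
    apply mul_nonneg (div_nonneg (mul_nonneg hM0 (pow_nonneg (by linarith) k)) (by positivity))
      (pow_nonneg hs k)
  have hBk0 : ∀ s : ℝ, Bk 0 s = M := by intro s; simp [hBk]
  have hBkd : ∀ (k : ℕ) (s : ℝ), HasDerivAt (Bk (k+1)) (4 * L * Bk k s) s := by
    intro k s
    have h := (hasDerivAt_pow (k+1) s).const_mul (M * (4*L)^(k+1) / ((k+1).factorial))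
    refine h.congr_deriv ?_
    have hfk : ((k+1).factorial : ℝ) = (k+1) * (k.factorial) := by
      rw [Nat.factorial_succ]; push_cast; ring
    rw [hBk]
    simp only [Nat.add_sub_cancel, hfk]
    push_cast
    field_simp
    ring
  have hBkcont : ∀ k : ℕ, Continuous (Bk k) := by
    intro k; exact continuous_const.mul (continuous_pow k)
  -- main induction
  have ind : ∀ k : ℕ, ∀ t ∈ Icc 0 S, ∀ j : ℤ, w t j - u t j ≤ Bk k t := by
    intro k
    induction k with
    | zero =>
      intro t ht j
      rw [hBk0]
      exact le_trans (le_abs_self _) (hMd t ht j)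
    | succ k ih =>
      intro t ht j
      by_cases hng : w t j - u t j ≤ 0
      · exact le_trans hng (hBknn (k+1) t ht.1)
      push_neg at hng
      set A := {s : ℝ | s ∈ Icc 0 t ∧ w s j - u s j ≤ 0} with hA
      have hsub : A ⊆ Icc 0 t := fun s hs => hs.1
      have hA0 : (0:ℝ) ∈ A := ⟨left_mem_Icc.mpr ht.1, by linarith [h0 j]⟩
      have hAne : A.Nonempty := ⟨0, hA0⟩
      have hAb : BddAbove A := (isCompact_Icc.bddAbove).mono hsub
      have hIccsub : Icc (0:ℝ) t ⊆ Icc 0 S := Icc_subset_Icc le_rfl ht.2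
      have hAc : IsClosed A := by
        have : A = Icc 0 t ∩ (fun s => w s j - u s j) ⁻¹' (Iic 0) := by
          ext s; simp [hA, Set.mem_inter_iff]
        rw [this]
        exact ContinuousOn.preimage_isClosed_of_isClosed
          ((hcont j).mono hIccsub) isClosed_Icc isClosed_Iic
      set t0 := sSup A with ht0def
      have ht0A : t0 ∈ A := hAc.csSup_mem hAne hAb
      have ht0 : t0 ∈ Icc 0 t := ht0A.1
      have ht0e : w t0 j - u t0 j ≤ 0 := ht0A.2
      have ht0t : t0 < t := lt_of_le_of_ne ht0.2 (by
        intro hcontr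
        rw [hcontr] at ht0e
        linarith)
      have hIocpos : ∀ s ∈ Ioc t0 t, 0 < w s j - u s j := by
        intro s hs
        by_contra hns
        push_neg at hns
        have hsA : s ∈ A := ⟨⟨le_trans ht0.1 hs.1.le, hs.2⟩, hns⟩
        exact absurd (le_csSup hAb hsA) (not_le.mpr hs.1)
      -- antitonicity of the difference with the comparison polynomial
      have hanti : AntitoneOn (fun s => (w s j - u s j) - Bk (k+1) s) (Icc t0 t) := by
        apply antitoneOn_of_deriv_nonpos (convex_Icc t0 t)
        · exact (((hcont j).mono (fun x hx => ⟨le_trans ht0.1 hx.1, le_trans hx.2 ht.2⟩)).sub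
            ((hBkcont (k+1)).continuousOn))
        · intro s hs
          rw [interior_Icc] at hs
          have hsIcc : s ∈ Icc 0 S := ⟨le_trans ht0.1 hs.1.le, le_trans hs.2.le ht.2⟩
          have hnhds : Icc (0:ℝ) S ∈ 𝓝 s := by
            refine Filter.mem_of_superset (isOpen_Ioo.mem_nhds ?_) Ioo_subset_Icc_self
            exact ⟨lt_of_le_of_lt ht0.1 hs.1, lt_of_lt_of_le hs.2 ht.2⟩
          have hda := (hde j s hsIcc).hasDerivAt hnhds
          exact ((hda.sub (hBkd k s)).differentiableAt).differentiableWithinAt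
        · intro s hs
          rw [interior_Icc] at hs
          have hsIcc : s ∈ Icc 0 S := ⟨le_trans ht0.1 hs.1.le, le_trans hs.2.le ht.2⟩
          have hnhds : Icc (0:ℝ) S ∈ 𝓝 s := by
            refine Filter.mem_of_superset (isOpen_Ioo.mem_nhds ?_) Ioo_subset_Icc_self
            exact ⟨lt_of_le_of_lt ht0.1 hs.1, lt_of_lt_of_le hs.2 ht.2⟩
          have hda := ((hde j s hsIcc).hasDerivAt hnhds).sub (hBkd k s)
          rw [show (fun s => w s j - u s j - Bk (k + 1) s) = ((fun s => w s j - u s j) - Bk (k + 1)) from rfl, hda.deriv]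
          -- apply key with b := min (Bk k s) M
          have hposs : 0 < w s j - u s j := hIocpos s ⟨hs.1, hs.2.le⟩
          have hbmin0 : 0 ≤ min (Bk k s) M := le_min (hBknn k s hsIcc.1) hM0
          have hkey := key s hsIcc j (min (Bk k s) M) hbmin0 (min_le_right _ _)
            (fun i => le_min (ih s hsIcc i) (le_trans (le_abs_self _) (hMd s hsIcc i)))
            hposs
          have : 4 * L * min (Bk k s) M ≤ 4 * L * Bk k s := by
            apply mul_le_mul_of_nonneg_left (min_le_left _ _) (by linarith)
          linarith
      have h1 := hanti (left_mem_Icc.mpr ht0.2) (right_mem_Icc.mpr ht0.2) ht0.2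
      have h2 : 0 ≤ Bk (k+1) t0 := hBknn (k+1) t0 ht0.1
      simp only at h1
      linarith
  -- conclusion via the limit
  intro t ht j
  have hle : ∀ k : ℕ, w t j - u t j ≤ Bk k t := fun k => ind k t ht j
  have htend : Tendsto (fun k : ℕ => Bk k t) atTop (𝓝 0) := by
    have h1 : Tendsto (fun k : ℕ => (4*L*t)^k / (k.factorial : ℝ)) atTop (𝓝 0) :=
      FloorSemiring.tendsto_pow_div_factorial_atTop (4*L*t)
    have h2 := h1.const_mul M
    rw [mul_zero] at h2
    convert h2 using 2 with k
    rw [hBk]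
    rw [mul_pow]
    ring
  have := ge_of_tendsto' htend hle
  linarith


theorem fk_Kn_invariant
    (δ : ℝ) (hδ : 0 < δ) (V : ℝ → ℝ → ℝ) (F : ℝ → ℝ)
    (hV : ContDiff ℝ 2 (Function.uncurry V))
    (hper : ∀ x y : ℝ, V (x + 1) (y + 1) = V x y)
    (htwist : ∀ x y : ℝ, V12 V x y ≤ -δ)
    (hF : Continuous F)
    (S : ℝ) (hS : 0 ≤ S) (m n : ℕ) (hnm : n ≤ m)
    (u : ℝ → ℤ → ℝ)
    (hsol : SolvesFK V F (Set.Icc 0 S) u)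
    (hm : ∀ t ∈ Set.Icc 0 S, u t ∈ Kn m)
    (h0 : u 0 ∈ Kn n) :
    ∀ t ∈ Set.Icc 0 S, u t ∈ Kn n := by
  have hn0 : (0:ℝ) ≤ (n:ℝ) := Nat.cast_nonneg n
  have hM0 : (0:ℝ) ≤ (m:ℝ) + n := by positivity
  -- upper comparison: shift left and down
  set w1 : ℝ → ℤ → ℝ := fun t j => u t (j+1) - n with hw1
  have hsw1 : SolvesFK V F (Set.Icc 0 S) w1 := by
    intro j t ht
    have h := (hsol (j+1) t ht).sub_const (n:ℝ)
    refine h.congr_deriv ?_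
    simp only [hw1]
    have e2 : j - 1 + 1 = j := by ring
    have e3 : j + 1 - 1 = j := by ring
    rw [e2, e3, V2_shiftN hV hper n (u t j) (u t (j+1)),
      V1_shiftN hV hper n (u t (j+1)) (u t (j+1+1))]
  have hMd1 : ∀ t ∈ Set.Icc 0 S, ∀ j : ℤ, |w1 t j - u t j| ≤ (m:ℝ) + n := by
    intro t ht j
    obtain ⟨h1, h2⟩ := abs_le.mp (hm t ht j)
    simp only [hw1]
    rw [abs_le]
    constructor <;> linarith
  have h01 : ∀ j : ℤ, w1 0 j ≤ u 0 j := by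
    intro j
    have := (abs_le.mp (h0 j)).2
    simp only [hw1]
    linarith
  have hupper := fk_core δ hδ V F hV hper htwist S hS m ((m:ℝ)+n) hM0 u w1 hsol hsw1 hm hMd1 h01
  -- lower comparison: shift right and down
  set w2 : ℝ → ℤ → ℝ := fun t j => u t (j-1) - n with hw2
  have hsw2 : SolvesFK V F (Set.Icc 0 S) w2 := by
    intro j t ht
    have h := (hsol (j-1) t ht).sub_const (n:ℝ)
    refine h.congr_deriv ?_
    simp only [hw2]
    have e2 : j - 1 + 1 = j := by ring
    have e3 : j + 1 - 1 = j := by ring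
    rw [e2, e3, V2_shiftN hV hper n (u t (j-1-1)) (u t (j-1)),
      V1_shiftN hV hper n (u t (j-1)) (u t j)]
  have hMd2 : ∀ t ∈ Set.Icc 0 S, ∀ j : ℤ, |w2 t j - u t j| ≤ (m:ℝ) + n := by
    intro t ht j
    have h := hm t ht (j-1)
    rw [show j - 1 + 1 = j from by ring] at h
    obtain ⟨h1, h2⟩ := abs_le.mp h
    simp only [hw2]
    rw [abs_le]
    constructor <;> linarith
  have h02 : ∀ j : ℤ, w2 0 j ≤ u 0 j := by
    intro j
    have h := h0 (j-1)
    rw [show j - 1 + 1 = j from by ring] at h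
    have := (abs_le.mp h).1
    simp only [hw2]
    linarith
  have hlower := fk_core δ hδ V F hV hper htwist S hS m ((m:ℝ)+n) hM0 u w2 hsol hsw2 hm hMd2 h02
  -- combine
  intro t ht i
  have h1 := hupper t ht i
  have h2 := hlower t ht (i+1)
  simp only [hw1] at h1
  simp only [hw2] at h2
  rw [show i + 1 - 1 = i from by ring] at h2
  rw [abs_le]
  constructor <;> linarith
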